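/- arXiv:0902.4840 — 3 statements merged into one kernel-verified Lean document; each statement's English description precedes it below -/
import Mathlib

section
/- For every m with 1 ≤ m ≤ n-1, the endomorphisms Φ_{σ_m} and Ψ_{σ_m} of the free group F are mutually inverse (Ψ_{σ_m} ∘ Φ_{σ_m} = id_F and Φ_{σ_m} ∘ Ψ_{σ_m} = id_F); in particular Φ_{σ_m} is an automorphism of F. -/
namespace PureHilden

/-- The three symbols `p`, `x`, `y`. -/
inductive Sym : Type
  | p | x | y
  deriving DecidableEq

open Sym

/-- Generators of the free group `F`:  `p_{ij}, x_{ij}, y_{ij}` for `1 ≤ i < j ≤ n`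
and `t_k` for `1 ≤ k ≤ n`. -/
inductive Gen (n : ℕ) : Type
  | pair (s : Sym) (i j : ℕ) (h : 1 ≤ i ∧ i < j ∧ j ≤ n) : Gen n
  | t (k : ℕ) (h : 1 ≤ k ∧ k ≤ n) : Gen n

/-- The free group `F` on the set `S`. -/
abbrev FG (n : ℕ) := FreeGroup (Gen n)

/-- `α_{ij}` (symmetrised: `α_{ji} = α_{ij}`); junk value `1` for invalid indices. -/
def gsym (n : ℕ) (s : Sym) (i j : ℕ) : FG n :=
  if h : 1 ≤ min i j ∧ min i j < max i j ∧ max i j ≤ n then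
    FreeGroup.of (Gen.pair s (min i j) (max i j) h)
  else 1

def P (n i j : ℕ) : FG n := gsym n Sym.p i j
def X (n i j : ℕ) : FG n := gsym n Sym.x i j
def Y (n i j : ℕ) : FG n := gsym n Sym.y i j

def T (n k : ℕ) : FG n :=
  if h : 1 ≤ k ∧ k ≤ n then FreeGroup.of (Gen.t k h) else 1

/-- `1 ≤ k ≤ n`. -/
def Idx (n k : ℕ) : Prop := 1 ≤ k ∧ k ≤ n

/-- `1 ≤ i < j ≤ n`. -/
def Idx2 (n i j : ℕ) : Prop := 1 ≤ i ∧ i < j ∧ j ≤ n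

/-- `(i,j,k)` is a cyclic rotation of a strictly increasing triple. -/
def cyc3 (i j k : ℕ) : Prop := (i < j ∧ j < k) ∨ (j < k ∧ k < i) ∨ (k < i ∧ i < j)

/-- `(i,j,k,l)` is a cyclic rotation of a strictly increasing quadruple. -/
def cyc4 (i j k l : ℕ) : Prop :=
  (i < j ∧ j < k ∧ k < l) ∨ (j < k ∧ k < l ∧ l < i) ∨
  (k < l ∧ l < i ∧ i < j) ∨ (l < i ∧ i < j ∧ j < k)

def c2A : List (Sym × Sym × Sym) :=
  [(p,p,p),(p,y,y),(x,p,p),(x,x,p),(x,y,y),(y,p,p),(y,p,x),(y,y,y)]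
def c2B : List (Sym × Sym × Sym) :=
  [(p,p,p),(p,x,y),(x,p,p),(x,p,x),(x,x,y),(y,p,p),(y,x,y),(y,y,p)]
def c2C : List (Sym × Sym × Sym) :=
  [(p,p,p),(p,x,x),(x,p,p),(x,x,x),(x,y,p),(y,p,p),(y,p,y),(y,x,x)]

/-- The allowed triples `(α,β,γ)` for relation (C2), by cyclic ordering of `(i,j,k)`. -/
def C2ok (i j k : ℕ) (a b c : Sym) : Prop :=
  (i < j ∧ j < k ∧ (a,b,c) ∈ c2A) ∨
  (j < k ∧ k < i ∧ (a,b,c) ∈ c2B) ∨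
  (k < i ∧ i < j ∧ (a,b,c) ∈ c2C)

/-- The relations `R`, encoded as the words `u * v⁻¹` for each relation `u = v`. -/
inductive Rel (n : ℕ) : FG n → Prop
  | cpt {i j k : ℕ} (hij : Idx2 n i j) (hk : Idx n k) :
      Rel n (P n i j * T n k * (T n k * P n i j)⁻¹)
  | ctt {i j : ℕ} (hi : Idx n i) (hj : Idx n j) :
      Rel n (T n i * T n j * (T n j * T n i)⁻¹)
  | cxt {i j k : ℕ} (hij : Idx2 n i j) (hk : Idx n k) (hne : k ≠ i) :
      Rel n (X n i j * T n k * (T n k * X n i j)⁻¹)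
  | cyt {i j k : ℕ} (hij : Idx2 n i j) (hk : Idx n k) (hne : k ≠ j) :
      Rel n (Y n i j * T n k * (T n k * Y n i j)⁻¹)
  | c1 (a b : Sym) {i j k l : ℕ} (hi : Idx n i) (hj : Idx n j) (hk : Idx n k)
      (hl : Idx n l) (hc : cyc4 i j k l) :
      Rel n (gsym n a i j * gsym n b k l * (gsym n b k l * gsym n a i j)⁻¹)
  | c2 (a b c : Sym) {i j k : ℕ} (hi : Idx n i) (hj : Idx n j) (hk : Idx n k)
      (h : C2ok i j k a b c) :
      Rel n (gsym n a i j * (gsym n b i k * gsym n c j k) *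
             (gsym n b i k * gsym n c j k * gsym n a i j)⁻¹)
  | c3 (a b : Sym) {i j k l : ℕ} (hi : Idx n i) (hj : Idx n j) (hk : Idx n k)
      (hl : Idx n l) (hc : cyc4 i j k l) :
      Rel n (gsym n a i k * (P n j k * gsym n b j l * (P n j k)⁻¹) *
             (P n j k * gsym n b j l * (P n j k)⁻¹ * gsym n a i k)⁻¹)
  | mx {i j : ℕ} (hij : Idx2 n i j) :
      Rel n (X n i j * P n i j * T n i * (P n i j * T n i * X n i j)⁻¹)
  | my {i j : ℕ} (hij : Idx2 n i j) :
      Rel n (Y n i j * P n i j * T n j * (P n i j * T n j * Y n i j)⁻¹)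

/-- The presented group `G = ⟨S ∣ R⟩`. -/
abbrev GG (n : ℕ) := FG n ⧸ Subgroup.normalClosure {w : FG n | Rel n w}

/-- The quotient homomorphism `π : F → G`. -/
def piG (n : ℕ) : FG n →* GG n := QuotientGroup.mk' _

/-- The map defining `Φ_{σ_m}` on generators. -/
def phiSigmaMap (n m : ℕ) : Gen n → FG n
  | Gen.pair s i j _ =>
      if i = m ∧ j = m + 1 then
        match s with
        | Sym.p => P n m (m+1)
        | Sym.x => (T n (m+1))⁻¹ * Y n m (m+1) * T n (m+1)
        | Sym.y => X n m (m+1)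
      else if i = m then gsym n s (m+1) j
      else if j = m then gsym n s (m+1) i
      else if i = m + 1 then P n m (m+1) * gsym n s m j * (P n m (m+1))⁻¹
      else if j = m + 1 then P n m (m+1) * gsym n s m i * (P n m (m+1))⁻¹
      else gsym n s i j
  | Gen.t k _ =>
      if k = m then T n (m+1) else if k = m + 1 then T n m else T n k

/-- `Φ_{σ_m} : F → F`. -/
def phiSigma (n m : ℕ) : FG n →* FG n := FreeGroup.lift (phiSigmaMap n m)

/-- The map defining `Ψ_{σ_m}` on generators. -/
def psiSigmaMap (n m : ℕ) : Gen n → FG n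
  | Gen.pair s i j _ =>
      if i = m ∧ j = m + 1 then
        match s with
        | Sym.p => P n m (m+1)
        | Sym.x => Y n m (m+1)
        | Sym.y => T n m * X n m (m+1) * (T n m)⁻¹
      else if i = m then (P n m (m+1))⁻¹ * gsym n s (m+1) j * P n m (m+1)
      else if j = m then (P n m (m+1))⁻¹ * gsym n s (m+1) i * P n m (m+1)
      else if i = m + 1 then gsym n s m j
      else if j = m + 1 then gsym n s m i
      else gsym n s i j
  | Gen.t k _ =>
      if k = m then T n (m+1) else if k = m + 1 then T n m else T n k

/-- `Ψ_{σ_m} : F → F`. -/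
def psiSigma (n m : ℕ) : FG n →* FG n := FreeGroup.lift (psiSigmaMap n m)

/-- The map defining `Φ_{τ_m}` on generators. -/
def phiTauMap (n m : ℕ) : Gen n → FG n
  | Gen.pair s i j _ =>
      match s with
      | Sym.p => P n i j
      | Sym.x => if m = i then (X n i j)⁻¹ * P n i j else X n i j
      | Sym.y => if m = j then (Y n i j)⁻¹ * P n i j else Y n i j
  | Gen.t k _ => T n k

/-- `Φ_{τ_m} : F → F`. -/
def phiTau (n m : ℕ) : FG n →* FG n := FreeGroup.lift (phiTauMap n m)

/-- The map defining `Ψ_{τ_m}` on generators. -/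
def psiTauMap (n m : ℕ) : Gen n → FG n
  | Gen.pair s i j _ =>
      match s with
      | Sym.p => P n i j
      | Sym.x => if m = i then P n i j * (X n i j)⁻¹ else X n i j
      | Sym.y => if m = j then P n i j * (Y n i j)⁻¹ else Y n i j
  | Gen.t k _ => T n k

/-- `Ψ_{τ_m} : F → F`. -/
def psiTau (n m : ℕ) : FG n →* FG n := FreeGroup.lift (psiTauMap n m)

/-! Both maps are defined on free generators, so each composite is the identity once it fixes
every generator. `Φ_{σ_m}` relabels indices by the transposition `(m m+1)` and conjugates by
`p_{m,m+1}` the generators that end up carrying the index `m`; `Ψ_{σ_m}` relabels back and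
conjugates by `p_{m,m+1}⁻¹` those that end up carrying `m+1`, so the conjugations cancel. On
`x_{m,m+1}` and `y_{m,m+1}` the twists by `t_{m+1}` and `t_m` cancel because both maps swap
`t_m` and `t_{m+1}`. -/

lemma gsym_comm (n : ℕ) (s : Sym) (i j : ℕ) : gsym n s j i = gsym n s i j := by
  simp only [gsym, Nat.min_comm, Nat.max_comm]

lemma gsym_eq_of (n : ℕ) (s : Sym) {i j : ℕ} (h : Idx2 n i j) :
    gsym n s i j = FreeGroup.of (Gen.pair s i j h) := by
  obtain ⟨h1, h2, h3⟩ := h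
  simp only [gsym, min_eq_left h2.le, max_eq_right h2.le]
  exact dif_pos ⟨h1, h2, h3⟩

lemma T_eq_of {n k : ℕ} (h : Idx n k) : T n k = FreeGroup.of (Gen.t k h) :=
  dif_pos h

lemma T_eq_one {n k : ℕ} (h : ¬ Idx n k) : T n k = 1 :=
  dif_neg h

lemma eq_id_of_fixes_generators {n m : ℕ} {F : FG n →* FG n}
    (hP : F (P n m (m+1)) = P n m (m+1)) (hX : F (X n m (m+1)) = X n m (m+1))
    (hY : F (Y n m (m+1)) = Y n m (m+1))
    (hleft : ∀ s l, Idx n l → l ≠ m → l ≠ m + 1 → F (gsym n s m l) = gsym n s m l)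
    (hright : ∀ s l, Idx n l → l ≠ m → l ≠ m + 1 → F (gsym n s (m+1) l) = gsym n s (m+1) l)
    (hfar : ∀ s k l, Idx2 n k l → k ≠ m → k ≠ m + 1 → l ≠ m → l ≠ m + 1 →
      F (gsym n s k l) = gsym n s k l)
    (hT : ∀ k, F (T n k) = T n k) :
    F = MonoidHom.id (FG n) := by
  refine FreeGroup.ext_hom _ _ fun g => ?_
  rw [MonoidHom.id_apply]
  cases g with
  | t k hk => simpa only [T_eq_of hk] using hT k
  | pair s i j h =>
    obtain ⟨h1, h2, h3⟩ := h
    rw [← gsym_eq_of n s ⟨h1, h2, h3⟩]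
    by_cases hi : i = m
    · subst hi
      by_cases hj : j = i + 1
      · subst hj
        cases s
        exacts [hP, hX, hY]
      · exact hleft s j ⟨by omega, h3⟩ (by omega) hj
    by_cases hi' : i = m + 1
    · subst hi'
      exact hright s j ⟨by omega, h3⟩ (by omega) (by omega)
    by_cases hj : j = m
    · subst hj
      rw [gsym_comm]
      exact hleft s i ⟨h1, by omega⟩ hi hi'
    by_cases hj' : j = m + 1
    · subst hj'
      rw [gsym_comm]
      exact hright s i ⟨h1, by omega⟩ hi hi'
    exact hfar s i j ⟨h1, h2, h3⟩ hi hi' hj hj'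

section Evaluation

variable {n m : ℕ}

lemma phiSigma_gsym (s : Sym) {i j : ℕ} (h : Idx2 n i j) :
    phiSigma n m (gsym n s i j) = phiSigmaMap n m (Gen.pair s i j h) := by
  rw [gsym_eq_of n s h, phiSigma, FreeGroup.lift_apply_of]

lemma psiSigma_gsym (s : Sym) {i j : ℕ} (h : Idx2 n i j) :
    psiSigma n m (gsym n s i j) = psiSigmaMap n m (Gen.pair s i j h) := by
  rw [gsym_eq_of n s h, psiSigma, FreeGroup.lift_apply_of]

lemma phiSigma_T (hm : 1 ≤ m) (hmn : m + 1 ≤ n) (k : ℕ) :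
    phiSigma n m (T n k) = T n (Equiv.swap m (m+1) k) := by
  by_cases hk : Idx n k
  · rw [T_eq_of hk, phiSigma, FreeGroup.lift_apply_of]
    simp only [phiSigmaMap]
    rw [Equiv.swap_apply_def]
    split_ifs <;> rfl
  · have hkm : k ≠ m := by rintro rfl; exact hk ⟨hm, by omega⟩
    have hkm' : k ≠ m + 1 := by rintro rfl; exact hk ⟨by omega, hmn⟩
    rw [Equiv.swap_apply_of_ne_of_ne hkm hkm', T_eq_one hk, map_one]

lemma psiSigma_T (hm : 1 ≤ m) (hmn : m + 1 ≤ n) (k : ℕ) :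
    psiSigma n m (T n k) = T n (Equiv.swap m (m+1) k) := by
  by_cases hk : Idx n k
  · rw [T_eq_of hk, psiSigma, FreeGroup.lift_apply_of]
    simp only [psiSigmaMap]
    rw [Equiv.swap_apply_def]
    split_ifs <;> rfl
  · have hkm : k ≠ m := by rintro rfl; exact hk ⟨hm, by omega⟩
    have hkm' : k ≠ m + 1 := by rintro rfl; exact hk ⟨by omega, hmn⟩
    rw [Equiv.swap_apply_of_ne_of_ne hkm hkm', T_eq_one hk, map_one]

lemma phiSigma_gsym_left (hm : 1 ≤ m) (hmn : m + 1 ≤ n) (s : Sym) {l : ℕ} (hl : Idx n l)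
    (hlm : l ≠ m) (hlm' : l ≠ m + 1) : phiSigma n m (gsym n s m l) = gsym n s (m+1) l := by
  rcases hlm.lt_or_gt with h | h
  · rw [gsym_comm, phiSigma_gsym s ⟨hl.1, h, by omega⟩]
    simp [phiSigmaMap, hlm]
  · rw [phiSigma_gsym s ⟨hm, h, hl.2⟩]
    simp [phiSigmaMap, hlm']

lemma phiSigma_gsym_right (hmn : m + 1 ≤ n) (s : Sym) {l : ℕ} (hl : Idx n l) (hlm : l ≠ m)
    (hlm' : l ≠ m + 1) :
    phiSigma n m (gsym n s (m+1) l) = P n m (m+1) * gsym n s m l * (P n m (m+1))⁻¹ := by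
  rcases hlm'.lt_or_gt with h | h
  · rw [gsym_comm, phiSigma_gsym s ⟨hl.1, h, hmn⟩]
    simp [phiSigmaMap, hlm, hlm']
  · rw [phiSigma_gsym s ⟨by omega, h, hl.2⟩]
    simp [phiSigmaMap, hlm, hlm']

lemma phiSigma_gsym_of_ne (s : Sym) {k l : ℕ} (h : Idx2 n k l) (hkm : k ≠ m) (hkm' : k ≠ m + 1)
    (hlm : l ≠ m) (hlm' : l ≠ m + 1) : phiSigma n m (gsym n s k l) = gsym n s k l := by
  rw [phiSigma_gsym s h]
  simp [phiSigmaMap, hkm, hkm', hlm, hlm']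

lemma phiSigma_P (hm : 1 ≤ m) (hmn : m + 1 ≤ n) : phiSigma n m (P n m (m+1)) = P n m (m+1) := by
  rw [P, phiSigma_gsym _ ⟨hm, lt_add_one m, hmn⟩]
  simp [phiSigmaMap, P]

lemma phiSigma_X (hm : 1 ≤ m) (hmn : m + 1 ≤ n) :
    phiSigma n m (X n m (m+1)) = (T n (m+1))⁻¹ * Y n m (m+1) * T n (m+1) := by
  rw [X, phiSigma_gsym _ ⟨hm, lt_add_one m, hmn⟩]
  simp [phiSigmaMap]

lemma phiSigma_Y (hm : 1 ≤ m) (hmn : m + 1 ≤ n) : phiSigma n m (Y n m (m+1)) = X n m (m+1) := by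
  rw [Y, phiSigma_gsym _ ⟨hm, lt_add_one m, hmn⟩]
  simp [phiSigmaMap]

lemma psiSigma_gsym_left (hm : 1 ≤ m) (hmn : m + 1 ≤ n) (s : Sym) {l : ℕ} (hl : Idx n l)
    (hlm : l ≠ m) (hlm' : l ≠ m + 1) :
    psiSigma n m (gsym n s m l) = (P n m (m+1))⁻¹ * gsym n s (m+1) l * P n m (m+1) := by
  rcases hlm.lt_or_gt with h | h
  · rw [gsym_comm, psiSigma_gsym s ⟨hl.1, h, by omega⟩]
    simp [psiSigmaMap, hlm]
  · rw [psiSigma_gsym s ⟨hm, h, hl.2⟩]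
    simp [psiSigmaMap, hlm']

lemma psiSigma_gsym_right (hmn : m + 1 ≤ n) (s : Sym) {l : ℕ} (hl : Idx n l) (hlm : l ≠ m)
    (hlm' : l ≠ m + 1) : psiSigma n m (gsym n s (m+1) l) = gsym n s m l := by
  rcases hlm'.lt_or_gt with h | h
  · rw [gsym_comm, psiSigma_gsym s ⟨hl.1, h, hmn⟩]
    simp [psiSigmaMap, hlm, hlm']
  · rw [psiSigma_gsym s ⟨by omega, h, hl.2⟩]
    simp [psiSigmaMap, hlm, hlm']

lemma psiSigma_gsym_of_ne (s : Sym) {k l : ℕ} (h : Idx2 n k l) (hkm : k ≠ m) (hkm' : k ≠ m + 1)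
    (hlm : l ≠ m) (hlm' : l ≠ m + 1) : psiSigma n m (gsym n s k l) = gsym n s k l := by
  rw [psiSigma_gsym s h]
  simp [psiSigmaMap, hkm, hkm', hlm, hlm']

lemma psiSigma_P (hm : 1 ≤ m) (hmn : m + 1 ≤ n) : psiSigma n m (P n m (m+1)) = P n m (m+1) := by
  rw [P, psiSigma_gsym _ ⟨hm, lt_add_one m, hmn⟩]
  simp [psiSigmaMap, P]

lemma psiSigma_X (hm : 1 ≤ m) (hmn : m + 1 ≤ n) : psiSigma n m (X n m (m+1)) = Y n m (m+1) := by
  rw [X, psiSigma_gsym _ ⟨hm, lt_add_one m, hmn⟩]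
  simp [psiSigmaMap]

lemma psiSigma_Y (hm : 1 ≤ m) (hmn : m + 1 ≤ n) :
    psiSigma n m (Y n m (m+1)) = T n m * X n m (m+1) * (T n m)⁻¹ := by
  rw [Y, psiSigma_gsym _ ⟨hm, lt_add_one m, hmn⟩]
  simp [psiSigmaMap]

end Evaluation

lemma psiSigma_comp_phiSigma {n m : ℕ} (hm : 1 ≤ m) (hmn : m + 1 ≤ n) :
    (psiSigma n m).comp (phiSigma n m) = MonoidHom.id (FG n) := by
  apply eq_id_of_fixes_generators (m := m)
  · simp [phiSigma_P hm hmn, psiSigma_P hm hmn]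
  · simp [phiSigma_X hm hmn, psiSigma_Y hm hmn, psiSigma_T hm hmn, mul_assoc]
  · simp [phiSigma_Y hm hmn, psiSigma_X hm hmn]
  · intro s l hl hlm hlm'
    simp [phiSigma_gsym_left hm hmn s hl hlm hlm', psiSigma_gsym_right hmn s hl hlm hlm']
  · intro s l hl hlm hlm'
    simp [phiSigma_gsym_right hmn s hl hlm hlm', psiSigma_gsym_left hm hmn s hl hlm hlm',
      psiSigma_P hm hmn, mul_assoc]
  · intro s k l h hkm hkm' hlm hlm'
    simp [phiSigma_gsym_of_ne s h hkm hkm' hlm hlm', psiSigma_gsym_of_ne s h hkm hkm' hlm hlm']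
  · intro k
    simp [phiSigma_T hm hmn, psiSigma_T hm hmn]

lemma phiSigma_comp_psiSigma {n m : ℕ} (hm : 1 ≤ m) (hmn : m + 1 ≤ n) :
    (phiSigma n m).comp (psiSigma n m) = MonoidHom.id (FG n) := by
  apply eq_id_of_fixes_generators (m := m)
  · simp [phiSigma_P hm hmn, psiSigma_P hm hmn]
  · simp [phiSigma_Y hm hmn, psiSigma_X hm hmn]
  · simp [phiSigma_X hm hmn, psiSigma_Y hm hmn, phiSigma_T hm hmn, mul_assoc]
  · intro s l hl hlm hlm'
    simp [phiSigma_gsym_right hmn s hl hlm hlm', psiSigma_gsym_left hm hmn s hl hlm hlm',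
      phiSigma_P hm hmn, mul_assoc]
  · intro s l hl hlm hlm'
    simp [phiSigma_gsym_left hm hmn s hl hlm hlm', psiSigma_gsym_right hmn s hl hlm hlm']
  · intro s k l h hkm hkm' hlm hlm'
    simp [phiSigma_gsym_of_ne s h hkm hkm' hlm hlm', psiSigma_gsym_of_ne s h hkm hkm' hlm hlm']
  · intro k
    simp [phiSigma_T hm hmn, psiSigma_T hm hmn]

theorem psiSigma_phiSigma_mutually_inverse_general (n : ℕ)
    (m : ℕ) (hm : 1 ≤ m ∧ m ≤ n - 1) :
    (psiSigma n m).comp (phiSigma n m) = MonoidHom.id (FG n) ∧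
    (phiSigma n m).comp (psiSigma n m) = MonoidHom.id (FG n) ∧
    Function.Bijective (phiSigma n m) := by
  have hmn : m + 1 ≤ n := by omega
  have hpsi_phi := psiSigma_comp_phiSigma hm.1 hmn
  have hphi_psi := phiSigma_comp_psiSigma hm.1 hmn
  exact ⟨hpsi_phi, hphi_psi, (MonoidHom.toMulEquiv _ _ hpsi_phi hphi_psi).bijective⟩

/-- For `1 ≤ m ≤ n-1`, `Φ_{σ_m}` and `Ψ_{σ_m}` are mutually inverse;
in particular `Φ_{σ_m}` is an automorphism of `F`. -/
theorem psiSigma_phiSigma_mutually_inverse (n : ℕ) (hn : 2 ≤ n)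
    (m : ℕ) (hm : 1 ≤ m ∧ m ≤ n - 1) :
    (psiSigma n m).comp (phiSigma n m) = MonoidHom.id (FG n) ∧
    (phiSigma n m).comp (psiSigma n m) = MonoidHom.id (FG n) ∧
    Function.Bijective (phiSigma n m) :=
  psiSigma_phiSigma_mutually_inverse_general n m hm

end PureHilden
end

section
/- Assume n ≥ 4. For every k with 3 < k ≤ n, in the presented group G the elements x_{12}x_{13} and p_{1k}p_{2k}p_{3k} commute: (x_{12}x_{13})(p_{1k}p_{2k}p_{3k}) =_R (p_{1k}p_{2k}p_{3k})(x_{12}x_{13}). -/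
/-! With `i < j < k < l`, relation (C2) makes `x_{ij}` commute with `p_{il} p_{jl}` and
`x_{ik}` with `p_{il} p_{kl}`, (C1) makes `x_{ij}` commute with `p_{kl}`, and (C3) makes `x_{ik}`
commute with `p_{il} p_{jl} p_{il}⁻¹`. Since
`p_{il} p_{jl} p_{kl} = (p_{il} p_{jl} p_{il}⁻¹) (p_{il} p_{kl})`, both `x_{ij}` and `x_{ik}`
commute with `p_{il} p_{jl} p_{kl}`. -/

namespace PureHilden

open Sym

lemma gsym_symm (n : ℕ) (s : Sym) (i j : ℕ) : gsym n s i j = gsym n s j i := by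
  simp only [gsym, Nat.min_comm, Nat.max_comm]

lemma commute_piG_of_rel {n : ℕ} {a b : FG n} (h : Rel n (a * b * (b * a)⁻¹)) :
    Commute (piG n a) (piG n b) := by
  have h1 : piG n (a * b * (b * a)⁻¹) = 1 :=
    (QuotientGroup.eq_one_iff _).mpr (Subgroup.subset_normalClosure h)
  rwa [map_mul, map_inv, mul_inv_eq_one] at h1

section Commute

variable {n i j k l : ℕ}

lemma commute_X_P_mul_P (hi : 1 ≤ i) (hij : i < j) (hjk : j < k) (hk : k ≤ n) :
    Commute (piG n (X n i j)) (piG n (P n i k * P n j k)) :=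
  commute_piG_of_rel <| Rel.c2 Sym.x Sym.p Sym.p ⟨hi, by omega⟩ ⟨by omega, by omega⟩
    ⟨by omega, hk⟩ (Or.inl ⟨hij, hjk, by decide⟩)

lemma commute_X_P_of_lt (hi : 1 ≤ i) (hij : i < j) (hjk : j < k) (hkl : k < l) (hl : l ≤ n) :
    Commute (piG n (X n i j)) (piG n (P n k l)) :=
  commute_piG_of_rel <| Rel.c1 Sym.x Sym.p ⟨hi, by omega⟩ ⟨by omega, by omega⟩
    ⟨by omega, by omega⟩ ⟨by omega, hl⟩ (Or.inl ⟨hij, hjk, hkl⟩)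

lemma commute_X_P_conj (hi : 1 ≤ i) (hij : i < j) (hjk : j < k) (hkl : k < l) (hl : l ≤ n) :
    Commute (piG n (X n i k)) (piG n (P n i l * P n j l * (P n i l)⁻¹)) := by
  have h := commute_piG_of_rel <| Rel.c3 Sym.x Sym.p (n := n) ⟨by omega, by omega⟩
    ⟨by omega, hl⟩ ⟨hi, by omega⟩ ⟨by omega, by omega⟩
    (Or.inr <| Or.inr <| Or.inl ⟨hij, hjk, hkl⟩)
  rwa [gsym_symm n Sym.x k i, gsym_symm n Sym.p l j, P, gsym_symm n Sym.p l i] at h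

lemma commute_X_mul_X_P_mul_P_mul_P (hi : 1 ≤ i) (hij : i < j) (hjk : j < k) (hkl : k < l)
    (hl : l ≤ n) :
    Commute (piG n (X n i j * X n i k)) (piG n (P n i l * P n j l * P n k l)) := by
  have hxij : Commute (piG n (X n i j)) (piG n (P n i l * P n j l * P n k l)) := by
    rw [map_mul]
    exact (commute_X_P_mul_P hi hij (by omega) hl).mul_right
      (commute_X_P_of_lt hi hij hjk hkl hl)
  have hxik : Commute (piG n (X n i k)) (piG n (P n i l * P n j l * P n k l)) := by
    rw [show P n i l * P n j l * P n k l = P n i l * P n j l * (P n i l)⁻¹ * (P n i l * P n k l)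
      by group, map_mul]
    exact (commute_X_P_conj hi hij hjk hkl hl).mul_right
      (commute_X_P_mul_P hi (by omega) hkl hl)
  rw [map_mul]
  exact hxij.mul_left hxik

end Commute

theorem x12x13_comm_p1kp2kp3k_general (n : ℕ) (k : ℕ)
    (hk : 3 < k ∧ k ≤ n) :
    piG n (X n 1 2 * X n 1 3 * (P n 1 k * P n 2 k * P n 3 k)) =
    piG n (P n 1 k * P n 2 k * P n 3 k * (X n 1 2 * X n 1 3)) := by
  rw [map_mul, map_mul]
  exact (commute_X_mul_X_P_mul_P_mul_P le_rfl (by decide) (by decide) hk.1 hk.2).eq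

/-- STATEMENT 8: For `n ≥ 4` and `3 < k ≤ n`, in `G` the elements `x₁₂x₁₃` and
`p₁ₖp₂ₖp₃ₖ` commute. -/
theorem x12x13_comm_p1kp2kp3k (n : ℕ) (hn : 4 ≤ n) (k : ℕ)
    (hk : 3 < k ∧ k ≤ n) :
    piG n (X n 1 2 * X n 1 3 * (P n 1 k * P n 2 k * P n 3 k)) =
    piG n (P n 1 k * P n 2 k * P n 3 k * (X n 1 2 * X n 1 3)) :=
  x12x13_comm_p1kp2kp3k_general n k hk

end PureHilden
end

section
/- For all indices 1 ≤ i < j < k ≤ n, in the presented group G one has y_{ij} t_j x_{jk} =_R p_{jk}^{-1} x_{jk} y_{ij} p_{jk} t_j. -/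
namespace PureHilden

open Sym

lemma piG_eq_of_rel {n : ℕ} {u v : FG n} (h : Rel n (u * v⁻¹)) : piG n u = piG n v := by
  rw [← mul_inv_eq_one, ← map_inv, ← map_mul, piG, QuotientGroup.mk'_apply,
    QuotientGroup.eq_one_iff]
  exact Subgroup.subset_normalClosure h

lemma _root_.Commute.inv_mul_right_of_mul_right {G : Type*} [Group G] {a b c d : G}
    (hc : Commute a (b * c)) (hd : Commute a (b * d)) : Commute a (c⁻¹ * d) := by
  simpa [mul_assoc] using hc.inv_right.mul_right hd

/-- (M-x), solved for `t_i x_ij`. -/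
lemma piG_T_mul_X {n i j : ℕ} (hij : Idx2 n i j) :
    piG n (T n i * X n i j) = piG n ((P n i j)⁻¹ * X n i j * (P n i j * T n i)) := by
  have hmx := piG_eq_of_rel (Rel.mx hij)
  simp only [map_mul, map_inv] at hmx ⊢
  rw [mul_assoc, ← mul_assoc (piG n (X n i j)), hmx]
  group

/-- `y_ij` commutes with `p_ik p_jk` and `p_ik x_jk` by (C2), hence with their quotient. -/
lemma commute_piG_Y_P_inv_mul_X {n i j k : ℕ} (h : 1 ≤ i ∧ i < j ∧ j < k ∧ k ≤ n) :
    Commute (piG n (Y n i j)) (piG n ((P n j k)⁻¹ * X n j k)) := by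
  have hi : Idx n i := ⟨by omega, by omega⟩
  have hj : Idx n j := ⟨by omega, by omega⟩
  have hk : Idx n k := ⟨by omega, by omega⟩
  have hypp := piG_eq_of_rel
    (Rel.c2 Sym.y Sym.p Sym.p hi hj hk (Or.inl ⟨h.2.1, h.2.2.1, by decide⟩))
  have hypx := piG_eq_of_rel
    (Rel.c2 Sym.y Sym.p Sym.x hi hj hk (Or.inl ⟨h.2.1, h.2.2.1, by decide⟩))
  simp only [map_mul, map_inv] at hypp hypx ⊢
  exact Commute.inv_mul_right_of_mul_right (b := piG n (P n i k)) hypp hypx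

theorem stmt10_general (n : ℕ) (i j k : ℕ)
    (h : 1 ≤ i ∧ i < j ∧ j < k ∧ k ≤ n) :
    piG n (Y n i j * T n j * X n j k) =
    piG n ((P n j k)⁻¹ * X n j k * Y n i j * P n j k * T n j) := by
  have htx := piG_T_mul_X (show Idx2 n j k from ⟨by omega, by omega, by omega⟩)
  have hcomm := (commute_piG_Y_P_inv_mul_X h).eq
  calc piG n (Y n i j * T n j * X n j k)
      = piG n (Y n i j) * piG n (T n j * X n j k) := by rw [mul_assoc, map_mul]
    _ = piG n (Y n i j) * piG n ((P n j k)⁻¹ * X n j k) * piG n (P n j k * T n j) := by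
        rw [htx, map_mul, mul_assoc]
    _ = piG n ((P n j k)⁻¹ * X n j k * Y n i j * P n j k * T n j) := by
        rw [hcomm]
        simp only [map_mul, map_inv, mul_assoc]

/-- STATEMENT 10: For `1 ≤ i < j < k ≤ n`, in `G`:
`y_ij t_j x_jk =_R p_jk⁻¹ x_jk y_ij p_jk t_j`. -/
theorem stmt10 (n : ℕ) (hn : 2 ≤ n) (i j k : ℕ)
    (h : 1 ≤ i ∧ i < j ∧ j < k ∧ k ≤ n) :
    piG n (Y n i j * T n j * X n j k) =
    piG n ((P n j k)⁻¹ * X n j k * Y n i j * P n j k * T n j) :=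
  stmt10_general n i j k h

end PureHilden
end
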